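/- arXiv:q-alg/9605006 — 3 statements merged into one kernel-verified Lean document; each statement's English description precedes it below -/
import Mathlib

section
/- If Γ is a left σ-covariant first-order calculus with flip-over operator ℓσ, then ℓσ(ϑ⊗1) = 1⊗ϑ for every ϑ ∈ Γ, and ℓσ(d⊗id) = (id⊗d)σ as maps A⊗A → A⊗Γ. -/
open TensorProduct

noncomputable section

variable {A : Type} {Γ : Type} [Ring A] [Algebra ℂ A] [AddCommGroup Γ] [Module ℂ Γ]

/-- A first-order differential calculus over the unital ℂ-algebra `A`:
a unital `A`-bimodule `Γ` with a differential `d` satisfying the Leibniz rule,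
such that `ι^l(a ⊗ b) = a · d b` is surjective. -/
structure FODC (A Γ : Type) [Ring A] [Algebra ℂ A] [AddCommGroup Γ] [Module ℂ Γ] where
  ml : A ⊗[ℂ] Γ →ₗ[ℂ] Γ
  mr : Γ ⊗[ℂ] A →ₗ[ℂ] Γ
  d : A →ₗ[ℂ] Γ
  ml_assoc : ∀ (a b : A) (x : Γ), ml (a ⊗ₜ ml (b ⊗ₜ x)) = ml ((a * b) ⊗ₜ x)
  mr_assoc : ∀ (x : Γ) (a b : A), mr (mr (x ⊗ₜ a) ⊗ₜ b) = mr (x ⊗ₜ (a * b))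
  mid_assoc : ∀ (a : A) (x : Γ) (b : A), ml (a ⊗ₜ mr (x ⊗ₜ b)) = mr (ml (a ⊗ₜ x) ⊗ₜ b)
  one_ml : ∀ x : Γ, ml ((1 : A) ⊗ₜ x) = x
  mr_one : ∀ x : Γ, mr (x ⊗ₜ (1 : A)) = x
  leibniz : ∀ a b : A, d (a * b) = ml (a ⊗ₜ d b) + mr (d a ⊗ₜ b)
  surj : Function.Surjective (ml ∘ₗ LinearMap.lTensor A d)

/-- `ι^l = m^l ∘ (id ⊗ d)`. -/
def FODC.iotaL (C : FODC A Γ) : A ⊗[ℂ] A →ₗ[ℂ] Γ := C.ml ∘ₗ LinearMap.lTensor A C.d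

/-- `ι^r = m^r ∘ (d ⊗ id)`. -/
def FODC.iotaR (C : FODC A Γ) : A ⊗[ℂ] A →ₗ[ℂ] Γ := C.mr ∘ₗ LinearMap.rTensor A C.d

/-- `σ` is a braid operator compatible with the multiplication:
`σ(m⊗id) = (id⊗m)(σ⊗id)(id⊗σ)` and `σ(id⊗m) = (m⊗id)(id⊗σ)(σ⊗id)`. -/
def IsBraid (σ : A ⊗[ℂ] A →ₗ[ℂ] A ⊗[ℂ] A) : Prop :=
  (∀ a b c : A, σ ((a * b) ⊗ₜ c) =
      (LinearMap.lTensor A (LinearMap.mul' ℂ A))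
        ((TensorProduct.assoc ℂ A A A)
          ((LinearMap.rTensor A σ)
            ((TensorProduct.assoc ℂ A A A).symm (a ⊗ₜ σ (b ⊗ₜ c)))))) ∧
  (∀ a b c : A, σ (a ⊗ₜ (b * c)) =
      (LinearMap.rTensor A (LinearMap.mul' ℂ A))
        ((TensorProduct.assoc ℂ A A A).symm
          ((LinearMap.lTensor A σ)
            ((TensorProduct.assoc ℂ A A A)
              ((LinearMap.rTensor A σ) ((a ⊗ₜ b) ⊗ₜ c))))))

/-- `ℓσ` is a left flip-over operator for `σ`: `ℓσ(ι^l⊗id) = (id⊗ι^l)(σ⊗id)(id⊗σ)`. -/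
def IsLeftFlip (C : FODC A Γ) (σ : A ⊗[ℂ] A →ₗ[ℂ] A ⊗[ℂ] A)
    (lσ : Γ ⊗[ℂ] A →ₗ[ℂ] A ⊗[ℂ] Γ) : Prop :=
  lσ ∘ₗ LinearMap.rTensor A C.iotaL =
    LinearMap.lTensor A C.iotaL ∘ₗ (TensorProduct.assoc ℂ A A A).toLinearMap ∘ₗ
      LinearMap.rTensor A σ ∘ₗ (TensorProduct.assoc ℂ A A A).symm.toLinearMap ∘ₗ
      LinearMap.lTensor A σ ∘ₗ (TensorProduct.assoc ℂ A A A).toLinearMap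

/-- `rσ` is a right flip-over operator for `σ`: `rσ(id⊗ι^r) = (ι^r⊗id)(id⊗σ)(σ⊗id)`. -/
def IsRightFlip (C : FODC A Γ) (σ : A ⊗[ℂ] A →ₗ[ℂ] A ⊗[ℂ] A)
    (rσ : A ⊗[ℂ] Γ →ₗ[ℂ] Γ ⊗[ℂ] A) : Prop :=
  rσ ∘ₗ LinearMap.lTensor A C.iotaR =
    LinearMap.rTensor A C.iotaR ∘ₗ (TensorProduct.assoc ℂ A A A).symm.toLinearMap ∘ₗ
      LinearMap.lTensor A σ ∘ₗ (TensorProduct.assoc ℂ A A A).toLinearMap ∘ₗ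
      LinearMap.rTensor A σ ∘ₗ (TensorProduct.assoc ℂ A A A).symm.toLinearMap

/-- For a left `σ`-covariant calculus: `ℓσ(ϑ⊗1) = 1⊗ϑ` and `ℓσ(d⊗id) = (id⊗d)σ`. -/
theorem stmt_2 (C : FODC A Γ) (σ : A ⊗[ℂ] A ≃ₗ[ℂ] A ⊗[ℂ] A)
    (hσ : IsBraid σ.toLinearMap)
    (hσ1 : ∀ a : A, σ ((1 : A) ⊗ₜ a) = a ⊗ₜ (1 : A))
    (hσ2 : ∀ a : A, σ (a ⊗ₜ (1 : A)) = (1 : A) ⊗ₜ a)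
    (lσ : Γ ⊗[ℂ] A →ₗ[ℂ] A ⊗[ℂ] Γ) (hflip : IsLeftFlip C σ.toLinearMap lσ) :
    (∀ ϑ : Γ, lσ (ϑ ⊗ₜ (1 : A)) = (1 : A) ⊗ₜ ϑ) ∧
      (∀ a b : A, lσ (C.d a ⊗ₜ b) = (LinearMap.lTensor A C.d) (σ (a ⊗ₜ b))) := by
  have hiota : ∀ a b : A, C.iotaL (a ⊗ₜ[ℂ] b) = C.ml (a ⊗ₜ C.d b) := by
    intro a b; simp [FODC.iotaL]
  have hiota1 : ∀ b : A, C.iotaL ((1:A) ⊗ₜ[ℂ] b) = C.d b := by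
    intro b; rw [hiota, C.one_ml]
  constructor
  · intro ϑ
    obtain ⟨t, ht⟩ := C.surj ϑ
    have key : ∀ t : A ⊗[ℂ] A,
        lσ ((C.iotaL t) ⊗ₜ (1:A)) = (1:A) ⊗ₜ (C.iotaL t) := by
      intro t
      induction t using TensorProduct.induction_on with
      | zero => simp
      | tmul a b =>
          have h := LinearMap.congr_fun hflip ((a ⊗ₜ[ℂ] b) ⊗ₜ[ℂ] (1:A))
          simpa only [LinearMap.coe_comp, Function.comp_apply, LinearMap.rTensor_tmul,
            LinearEquiv.coe_coe, TensorProduct.assoc_tmul, LinearMap.lTensor_tmul,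
            TensorProduct.assoc_symm_tmul, hσ1, hσ2] using h
      | add x y hx hy =>
          simp only [map_add, TensorProduct.add_tmul, TensorProduct.tmul_add, hx, hy]
    rw [← ht]; exact key t
  · have key2 : ∀ t : A ⊗[ℂ] A,
        (LinearMap.lTensor A C.iotaL)
          ((TensorProduct.assoc ℂ A A A)
            ((LinearMap.rTensor A σ.toLinearMap)
              ((TensorProduct.assoc ℂ A A A).symm ((1:A) ⊗ₜ t)))) =
          LinearMap.lTensor A C.d t := by
      intro t
      induction t using TensorProduct.induction_on with
      | zero => simp only [TensorProduct.tmul_zero, LinearEquiv.map_zero, LinearMap.map_zero]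
      | tmul x y =>
          simp only [TensorProduct.assoc_symm_tmul, LinearMap.rTensor_tmul,
            LinearEquiv.coe_coe, hσ1, TensorProduct.assoc_tmul, LinearMap.lTensor_tmul, hiota1]
      | add x y hx hy =>
          simp only [TensorProduct.tmul_add, map_add, hx, hy]
    intro a b
    have h := LinearMap.congr_fun hflip (((1:A) ⊗ₜ[ℂ] a) ⊗ₜ[ℂ] b)
    simp only [LinearMap.coe_comp, Function.comp_apply, LinearMap.rTensor_tmul,
      LinearEquiv.coe_coe, TensorProduct.assoc_tmul, LinearMap.lTensor_tmul, hiota1] at h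
    rw [h, key2]
end
end

section
/- If Γ is a left σ-covariant first-order calculus then the flip-over operator ℓσ satisfies: (id⊗m^l)(σ⊗id)(id⊗ℓσ) = ℓσ(m^l⊗id), (id⊗m^r)(ℓσ⊗id)(id⊗σ) = ℓσ(m^r⊗id), and (m⊗id)(id⊗ℓσ)(ℓσ⊗id) = ℓσ(id⊗m), where m^l : A⊗Γ → Γ and m^r : Γ⊗A → Γ are the left and right module multiplications. -/
open TensorProduct

noncomputable section

variable {A : Type} {Γ : Type} [Ring A] [Algebra ℂ A] [AddCommGroup Γ] [Module ℂ Γ]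

set_option synthInstance.maxHeartbeats 400000
set_option maxHeartbeats 1000000
section Helpers

variable {A : Type} {Γ : Type} [Ring A] [Algebra ℂ A] [AddCommGroup Γ] [Module ℂ Γ]

lemma iotaL_tmul (C : FODC A Γ) (x y : A) : C.iotaL (x ⊗ₜ[ℂ] y) = C.ml (x ⊗ₜ C.d y) := rfl

lemma ml_iotaL (C : FODC A Γ) (a x y : A) :
    C.ml (a ⊗ₜ C.iotaL (x ⊗ₜ y)) = C.iotaL ((a * x) ⊗ₜ y) := by
  simp [iotaL_tmul, C.ml_assoc]

lemma mr_iotaL (C : FODC A Γ) (x y b : A) :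
    C.mr (C.iotaL (x ⊗ₜ y) ⊗ₜ b) = C.iotaL (x ⊗ₜ (y * b)) - C.iotaL ((x * y) ⊗ₜ b) := by
  have h := C.leibniz y b
  have h2 : C.mr (C.d y ⊗ₜ b) = C.d (y * b) - C.ml (y ⊗ₜ C.d b) := by
    rw [h]; abel
  rw [iotaL_tmul, ← C.mid_assoc, h2]
  simp [iotaL_tmul, TensorProduct.tmul_sub, C.ml_assoc]

lemma flip_pt (C : FODC A Γ) {σ : A ⊗[ℂ] A →ₗ[ℂ] A ⊗[ℂ] A} {lσ : Γ ⊗[ℂ] A →ₗ[ℂ] A ⊗[ℂ] Γ}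
    (hflip : IsLeftFlip C σ lσ) (x y z : A) :
    lσ (C.iotaL (x ⊗ₜ y) ⊗ₜ z) =
      LinearMap.lTensor A C.iotaL ((TensorProduct.assoc ℂ A A A)
        (LinearMap.rTensor A σ ((TensorProduct.assoc ℂ A A A).symm (x ⊗ₜ σ (y ⊗ₜ z))))) := by
  have := LinearMap.congr_fun hflip ((x ⊗ₜ y) ⊗ₜ z)
  simpa using this

end Helpers

/-- Module compatibilities of the left flip-over operator:
`(id⊗m^l)(σ⊗id)(id⊗ℓσ) = ℓσ(m^l⊗id)`, `(id⊗m^r)(ℓσ⊗id)(id⊗σ) = ℓσ(m^r⊗id)`,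
and `(m⊗id)(id⊗ℓσ)(ℓσ⊗id) = ℓσ(id⊗m)`. -/
theorem stmt_4 (C : FODC A Γ) (σ : A ⊗[ℂ] A ≃ₗ[ℂ] A ⊗[ℂ] A)
    (hσ : IsBraid σ.toLinearMap)
    (lσ : Γ ⊗[ℂ] A →ₗ[ℂ] A ⊗[ℂ] Γ) (hflip : IsLeftFlip C σ.toLinearMap lσ) :
    (lσ ∘ₗ LinearMap.rTensor A C.ml =
      LinearMap.lTensor A C.ml ∘ₗ (TensorProduct.assoc ℂ A A Γ).toLinearMap ∘ₗ
        LinearMap.rTensor Γ σ.toLinearMap ∘ₗ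
        (TensorProduct.assoc ℂ A A Γ).symm.toLinearMap ∘ₗ
        LinearMap.lTensor A lσ ∘ₗ (TensorProduct.assoc ℂ A Γ A).toLinearMap) ∧
    (lσ ∘ₗ LinearMap.rTensor A C.mr =
      LinearMap.lTensor A C.mr ∘ₗ (TensorProduct.assoc ℂ A Γ A).toLinearMap ∘ₗ
        LinearMap.rTensor A lσ ∘ₗ
        (TensorProduct.assoc ℂ Γ A A).symm.toLinearMap ∘ₗ
        LinearMap.lTensor Γ σ.toLinearMap ∘ₗ (TensorProduct.assoc ℂ Γ A A).toLinearMap) ∧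
    (lσ ∘ₗ LinearMap.lTensor Γ (LinearMap.mul' ℂ A) ∘ₗ
        (TensorProduct.assoc ℂ Γ A A).toLinearMap =
      LinearMap.rTensor Γ (LinearMap.mul' ℂ A) ∘ₗ
        (TensorProduct.assoc ℂ A A Γ).symm.toLinearMap ∘ₗ
        LinearMap.lTensor A lσ ∘ₗ (TensorProduct.assoc ℂ A Γ A).toLinearMap ∘ₗ
        LinearMap.rTensor A lσ) := by
  
  refine ⟨?_, ?_, ?_⟩
  ·
      have hsurj : Function.Surjective (⇑C.iotaL) := C.surj
      obtain ⟨hb1, hb2⟩ := hσ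
      simp only [LinearEquiv.coe_coe] at hb1 hb2
      set F := lσ ∘ₗ LinearMap.rTensor A C.ml with hF
      set G := LinearMap.lTensor A C.ml ∘ₗ (TensorProduct.assoc ℂ A A Γ).toLinearMap ∘ₗ
            LinearMap.rTensor Γ σ.toLinearMap ∘ₗ
            (TensorProduct.assoc ℂ A A Γ).symm.toLinearMap ∘ₗ
            LinearMap.lTensor A lσ ∘ₗ (TensorProduct.assoc ℂ A Γ A).toLinearMap with hG
      have hcomp : F ∘ₗ LinearMap.rTensor A (LinearMap.lTensor A C.iotaL)
          = G ∘ₗ LinearMap.rTensor A (LinearMap.lTensor A C.iotaL) := by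
        ext a b b' c
        simp only [hF, hG, LinearMap.coe_comp, Function.comp_apply,
          TensorProduct.AlgebraTensorModule.curry_apply, TensorProduct.curry_apply,
          LinearMap.coe_restrictScalars, LinearMap.rTensor_tmul, LinearMap.lTensor_tmul,
          LinearEquiv.coe_coe, TensorProduct.assoc_tmul, TensorProduct.assoc_symm_tmul]
        rw [ml_iotaL, flip_pt C hflip, flip_pt C hflip]
        generalize σ.toLinearMap (b' ⊗ₜ c) = w
        induction w with
        | zero => simp only [TensorProduct.tmul_zero, TensorProduct.zero_tmul, map_zero]
        | add x y hx hy =>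
          simp only [TensorProduct.tmul_add, map_add, hx, hy]
        | tmul u v =>
          simp only [TensorProduct.assoc_symm_tmul, LinearMap.rTensor_tmul, LinearEquiv.coe_coe,
            TensorProduct.assoc_tmul, LinearMap.lTensor_tmul]
          rw [hb1 a b u]
          generalize σ (b ⊗ₜ u) = w2
          induction w2 with
          | zero => simp only [TensorProduct.tmul_zero, TensorProduct.zero_tmul, map_zero]
          | add x y hx hy =>
            simp only [TensorProduct.tmul_add, TensorProduct.add_tmul, map_add, hx, hy]
          | tmul p q =>
            simp only [TensorProduct.assoc_symm_tmul, LinearMap.rTensor_tmul, LinearEquiv.coe_coe,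
              TensorProduct.assoc_tmul, LinearMap.lTensor_tmul]
            generalize σ (a ⊗ₜ p) = w3
            induction w3 with
            | zero => simp only [TensorProduct.tmul_zero, TensorProduct.zero_tmul, map_zero]
            | add x y hx hy =>
              simp only [TensorProduct.tmul_add, TensorProduct.add_tmul, map_add, hx, hy]
            | tmul r s =>
              simp only [TensorProduct.assoc_tmul, LinearMap.lTensor_tmul, LinearMap.mul'_apply,
                ml_iotaL]
      apply LinearMap.ext; intro z
      obtain ⟨z', rfl⟩ := LinearMap.rTensor_surjective A
        (LinearMap.lTensor_surjective A hsurj) z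
      exact LinearMap.congr_fun hcomp z'
  ·
      have hsurj : Function.Surjective (⇑C.iotaL) := C.surj
      obtain ⟨hb1, hb2⟩ := hσ
      simp only [LinearEquiv.coe_coe] at hb1 hb2
      set F := lσ ∘ₗ LinearMap.rTensor A C.mr with hF
      set G := LinearMap.lTensor A C.mr ∘ₗ (TensorProduct.assoc ℂ A Γ A).toLinearMap ∘ₗ
            LinearMap.rTensor A lσ ∘ₗ
            (TensorProduct.assoc ℂ Γ A A).symm.toLinearMap ∘ₗ
            LinearMap.lTensor Γ σ.toLinearMap ∘ₗ (TensorProduct.assoc ℂ Γ A A).toLinearMap with hG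
      have hcomp : F ∘ₗ LinearMap.rTensor A (LinearMap.rTensor A C.iotaL)
          = G ∘ₗ LinearMap.rTensor A (LinearMap.rTensor A C.iotaL) := by
        ext a a' b c
        simp only [hF, hG, LinearMap.coe_comp, Function.comp_apply,
          TensorProduct.AlgebraTensorModule.curry_apply, TensorProduct.curry_apply,
          LinearMap.coe_restrictScalars, LinearMap.rTensor_tmul, LinearMap.lTensor_tmul,
          LinearEquiv.coe_coe, TensorProduct.assoc_tmul, TensorProduct.assoc_symm_tmul]
        rw [mr_iotaL, TensorProduct.sub_tmul, map_sub, flip_pt C hflip, flip_pt C hflip]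
        simp only [LinearEquiv.coe_coe]
        rw [hb1 a' b c]
        generalize σ (b ⊗ₜ c) = w
        induction w with
        | zero => simp only [TensorProduct.tmul_zero, TensorProduct.zero_tmul, map_zero, sub_zero]
        | add x y hx hy =>
          simp only [TensorProduct.tmul_add, TensorProduct.add_tmul, map_add]
          rw [← sub_add_sub_comm, hx, hy]
        | tmul u v =>
          simp only [TensorProduct.assoc_symm_tmul, LinearMap.rTensor_tmul, LinearEquiv.coe_coe,
            TensorProduct.assoc_tmul, LinearMap.lTensor_tmul]
          rw [hb1 a a' u, flip_pt C hflip]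
          simp only [LinearEquiv.coe_coe]
          generalize σ (a' ⊗ₜ u) = w2
          induction w2 with
          | zero => simp only [TensorProduct.tmul_zero, TensorProduct.zero_tmul, map_zero, sub_zero]
          | add x y hx hy =>
            simp only [TensorProduct.tmul_add, TensorProduct.add_tmul, map_add]
            rw [← sub_add_sub_comm, hx, hy]
          | tmul p q =>
            simp only [TensorProduct.assoc_symm_tmul, LinearMap.rTensor_tmul, LinearEquiv.coe_coe,
              TensorProduct.assoc_tmul, LinearMap.lTensor_tmul, LinearMap.mul'_apply]
            generalize σ (a ⊗ₜ p) = w3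
            induction w3 with
            | zero => simp only [TensorProduct.tmul_zero, TensorProduct.zero_tmul, map_zero, sub_zero]
            | add x y hx hy =>
              simp only [TensorProduct.tmul_add, TensorProduct.add_tmul, map_add]
              rw [← sub_add_sub_comm, hx, hy]
            | tmul r s =>
              simp only [TensorProduct.assoc_tmul, LinearMap.lTensor_tmul, LinearMap.mul'_apply,
                mr_iotaL, TensorProduct.tmul_sub]
      apply LinearMap.ext; intro z
      obtain ⟨z', rfl⟩ := LinearMap.rTensor_surjective A
        (LinearMap.rTensor_surjective A hsurj) z
      exact LinearMap.congr_fun hcomp z'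
  ·
      have hsurj : Function.Surjective (⇑C.iotaL) := C.surj
      obtain ⟨hb1, hb2⟩ := hσ
      simp only [LinearEquiv.coe_coe] at hb1 hb2
      set F := lσ ∘ₗ LinearMap.lTensor Γ (LinearMap.mul' ℂ A) ∘ₗ
            (TensorProduct.assoc ℂ Γ A A).toLinearMap with hF
      set G := LinearMap.rTensor Γ (LinearMap.mul' ℂ A) ∘ₗ
            (TensorProduct.assoc ℂ A A Γ).symm.toLinearMap ∘ₗ
            LinearMap.lTensor A lσ ∘ₗ (TensorProduct.assoc ℂ A Γ A).toLinearMap ∘ₗ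
            LinearMap.rTensor A lσ with hG
      have hcomp : F ∘ₗ LinearMap.rTensor A (LinearMap.rTensor A C.iotaL)
          = G ∘ₗ LinearMap.rTensor A (LinearMap.rTensor A C.iotaL) := by
        ext a a' b c
        simp only [hF, hG, LinearMap.coe_comp, Function.comp_apply,
          TensorProduct.AlgebraTensorModule.curry_apply, TensorProduct.curry_apply,
          LinearMap.coe_restrictScalars, LinearMap.rTensor_tmul, LinearMap.lTensor_tmul,
          LinearEquiv.coe_coe, TensorProduct.assoc_tmul, TensorProduct.assoc_symm_tmul,
          LinearMap.mul'_apply]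
        rw [flip_pt C hflip, flip_pt C hflip]
        simp only [LinearEquiv.coe_coe]
        rw [hb2 a' b c]
        simp only [LinearMap.rTensor_tmul, LinearEquiv.coe_coe]
        -- now both sides are functions of w := σ (a' ⊗ₜ b)
        have h1 : ∀ w : A ⊗[ℂ] A,
            LinearMap.lTensor A C.iotaL ((TensorProduct.assoc ℂ A A A)
              (LinearMap.rTensor A σ.toLinearMap ((TensorProduct.assoc ℂ A A A).symm
                (a ⊗ₜ (LinearMap.rTensor A (LinearMap.mul' ℂ A)
                  ((TensorProduct.assoc ℂ A A A).symm (LinearMap.lTensor A σ.toLinearMap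
                    ((TensorProduct.assoc ℂ A A A) (w ⊗ₜ c))))))))) =
            (TensorProduct.map (LinearMap.mul' ℂ A) C.iotaL)
              ((TensorProduct.assoc ℂ (A ⊗[ℂ] A) A A)
                (LinearMap.rTensor A ((TensorProduct.assoc ℂ A A A).symm.toLinearMap ∘ₗ
                    LinearMap.lTensor A σ.toLinearMap ∘ₗ (TensorProduct.assoc ℂ A A A).toLinearMap)
                  ((TensorProduct.assoc ℂ (A ⊗[ℂ] A) A A).symm
                    ((TensorProduct.map (σ.toLinearMap ∘ₗ TensorProduct.mk ℂ A A a)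
                        (σ.toLinearMap ∘ₗ (TensorProduct.mk ℂ A A).flip c)) w)))) := by
          intro w
          induction w with
          | zero => simp only [TensorProduct.tmul_zero, TensorProduct.zero_tmul, map_zero]
          | add x y hx hy => simp only [TensorProduct.tmul_add, TensorProduct.add_tmul, map_add, hx, hy]
          | tmul u v =>
            simp only [TensorProduct.assoc_tmul, LinearMap.lTensor_tmul, TensorProduct.map_tmul,
              LinearMap.coe_comp, Function.comp_apply, TensorProduct.mk_apply,
              LinearMap.flip_apply, LinearEquiv.coe_coe, TensorProduct.assoc_symm_tmul]
            generalize σ (v ⊗ₜ c) = t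
            induction t with
            | zero => simp only [TensorProduct.tmul_zero, TensorProduct.zero_tmul, map_zero]
            | add x y hx hy => simp only [TensorProduct.tmul_add, TensorProduct.add_tmul, map_add, hx, hy]
            | tmul x y =>
              simp only [TensorProduct.assoc_symm_tmul, LinearMap.rTensor_tmul, LinearMap.mul'_apply,
                LinearEquiv.coe_coe]
              rw [hb2 a u x]
              simp only [LinearMap.rTensor_tmul, LinearEquiv.coe_coe]
              generalize σ (a ⊗ₜ u) = s
              induction s with
              | zero => simp only [TensorProduct.tmul_zero, TensorProduct.zero_tmul, map_zero]
              | add x' y' hx hy => simp only [TensorProduct.tmul_add, TensorProduct.add_tmul, map_add, hx, hy]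
              | tmul r s' =>
                simp only [TensorProduct.assoc_tmul, LinearMap.lTensor_tmul, LinearEquiv.coe_coe,
                  TensorProduct.assoc_symm_tmul, LinearMap.coe_comp, Function.comp_apply,
                  LinearMap.rTensor_tmul]
                generalize σ (s' ⊗ₜ x) = p
                induction p with
                | zero => simp only [TensorProduct.tmul_zero, TensorProduct.zero_tmul, map_zero]
                | add x' y' hx hy => simp only [TensorProduct.tmul_add, TensorProduct.add_tmul, map_add, hx, hy]
                | tmul p q =>
                  simp only [TensorProduct.assoc_symm_tmul, LinearMap.rTensor_tmul,
                    LinearMap.mul'_apply, TensorProduct.assoc_tmul, LinearMap.lTensor_tmul,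
                    TensorProduct.map_tmul, LinearEquiv.coe_coe]
        have h2 : ∀ w : A ⊗[ℂ] A,
            LinearMap.rTensor Γ (LinearMap.mul' ℂ A) ((TensorProduct.assoc ℂ A A Γ).symm
              (LinearMap.lTensor A lσ ((TensorProduct.assoc ℂ A Γ A)
                ((LinearMap.lTensor A C.iotaL ((TensorProduct.assoc ℂ A A A)
                  (LinearMap.rTensor A σ.toLinearMap
                    ((TensorProduct.assoc ℂ A A A).symm (a ⊗ₜ w))))) ⊗ₜ c)))) =
            (TensorProduct.map (LinearMap.mul' ℂ A) C.iotaL)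
              ((TensorProduct.assoc ℂ (A ⊗[ℂ] A) A A)
                (LinearMap.rTensor A ((TensorProduct.assoc ℂ A A A).symm.toLinearMap ∘ₗ
                    LinearMap.lTensor A σ.toLinearMap ∘ₗ (TensorProduct.assoc ℂ A A A).toLinearMap)
                  ((TensorProduct.assoc ℂ (A ⊗[ℂ] A) A A).symm
                    ((TensorProduct.map (σ.toLinearMap ∘ₗ TensorProduct.mk ℂ A A a)
                        (σ.toLinearMap ∘ₗ (TensorProduct.mk ℂ A A).flip c)) w)))) := by
          intro w
          induction w with
          | zero => simp only [TensorProduct.tmul_zero, TensorProduct.zero_tmul, map_zero]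
          | add x y hx hy => simp only [TensorProduct.tmul_add, TensorProduct.add_tmul, map_add, hx, hy]
          | tmul u v =>
            simp only [TensorProduct.assoc_symm_tmul, LinearMap.rTensor_tmul, TensorProduct.map_tmul,
              LinearMap.coe_comp, Function.comp_apply, TensorProduct.mk_apply,
              LinearMap.flip_apply, LinearEquiv.coe_coe]
            generalize σ (a ⊗ₜ u) = s
            induction s with
            | zero => simp only [TensorProduct.tmul_zero, TensorProduct.zero_tmul, map_zero]
            | add x y hx hy => simp only [TensorProduct.tmul_add, TensorProduct.add_tmul, map_add, hx, hy]
            | tmul r s' =>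
              simp only [TensorProduct.assoc_tmul, LinearMap.lTensor_tmul, LinearEquiv.coe_coe,
                TensorProduct.assoc_symm_tmul, LinearMap.coe_comp, Function.comp_apply]
              rw [flip_pt C hflip]
              simp only [LinearEquiv.coe_coe]
              generalize σ (v ⊗ₜ c) = t
              induction t with
              | zero => simp only [TensorProduct.tmul_zero, TensorProduct.zero_tmul, map_zero]
              | add x y hx hy => simp only [TensorProduct.tmul_add, TensorProduct.add_tmul, map_add, hx, hy]
              | tmul x y =>
                simp only [TensorProduct.assoc_symm_tmul, LinearMap.rTensor_tmul,
                  TensorProduct.assoc_tmul, LinearMap.lTensor_tmul, LinearEquiv.coe_coe,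
                  LinearMap.coe_comp, Function.comp_apply]
                generalize σ (s' ⊗ₜ x) = p
                induction p with
                | zero => simp only [TensorProduct.tmul_zero, TensorProduct.zero_tmul, map_zero]
                | add x' y' hx hy => simp only [TensorProduct.tmul_add, TensorProduct.add_tmul, map_add, hx, hy]
                | tmul p q =>
                  simp only [TensorProduct.assoc_symm_tmul, LinearMap.rTensor_tmul,
                    LinearMap.mul'_apply, TensorProduct.assoc_tmul, LinearMap.lTensor_tmul,
                    TensorProduct.map_tmul, LinearEquiv.coe_coe]
        rw [h1, h2]
      apply LinearMap.ext; intro z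
      obtain ⟨z', rfl⟩ := LinearMap.rTensor_surjective A
        (LinearMap.rTensor_surjective A hsurj) z
      exact LinearMap.congr_fun hcomp z'
end
end

section
/- If Γ is a left σ-covariant first-order calculus with σ bijective, then the flip-over operator ℓσ : Γ⊗A → A⊗Γ is surjective. Explicitly, for a,b,q ∈ A, the element ω = (m^l⊗id)(id⊗d⊗id)(id⊗σ^{-1})(σ^{-1}⊗id)(a⊗b⊗q) satisfies ℓσ(ω) = a⊗b·d(q). -/
open TensorProduct

noncomputable section

variable {A : Type} {Γ : Type} [Ring A] [Algebra ℂ A] [AddCommGroup Γ] [Module ℂ Γ]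

lemma step_eq (C : FODC A Γ) :
    LinearMap.rTensor A C.ml ∘ₗ (TensorProduct.assoc ℂ A Γ A).symm.toLinearMap ∘ₗ
      LinearMap.lTensor A (LinearMap.rTensor A C.d) =
    LinearMap.rTensor A C.iotaL ∘ₗ (TensorProduct.assoc ℂ A A A).symm.toLinearMap := by
  ext a u v
  simp [FODC.iotaL]

lemma chain_eq (C : FODC A Γ) (σ : A ⊗[ℂ] A ≃ₗ[ℂ] A ⊗[ℂ] A)
    (lσ : Γ ⊗[ℂ] A →ₗ[ℂ] A ⊗[ℂ] Γ) (hflip : IsLeftFlip C σ.toLinearMap lσ)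
    (t : (A ⊗[ℂ] A) ⊗[ℂ] A) :
    lσ ((LinearMap.rTensor A C.ml)
        ((TensorProduct.assoc ℂ A Γ A).symm
          ((LinearMap.lTensor A (LinearMap.rTensor A C.d))
            ((LinearMap.lTensor A σ.symm.toLinearMap)
              ((TensorProduct.assoc ℂ A A A)
                ((LinearMap.rTensor A σ.symm.toLinearMap) t)))))) =
      LinearMap.lTensor A C.iotaL ((TensorProduct.assoc ℂ A A A) t) := by
  set s : (A ⊗[ℂ] A) ⊗[ℂ] A :=
    (TensorProduct.assoc ℂ A A A).symm
      ((LinearMap.lTensor A σ.symm.toLinearMap)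
        ((TensorProduct.assoc ℂ A A A) ((LinearMap.rTensor A σ.symm.toLinearMap) t))) with hs
  have h1 : (LinearMap.rTensor A C.ml)
      ((TensorProduct.assoc ℂ A Γ A).symm
        ((LinearMap.lTensor A (LinearMap.rTensor A C.d))
          ((LinearMap.lTensor A σ.symm.toLinearMap)
            ((TensorProduct.assoc ℂ A A A)
              ((LinearMap.rTensor A σ.symm.toLinearMap) t))))) =
      LinearMap.rTensor A C.iotaL s := by
    rw [hs]
    have := congrFun (congrArg DFunLike.coe (step_eq C))
      ((LinearMap.lTensor A σ.symm.toLinearMap)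
        ((TensorProduct.assoc ℂ A A A) ((LinearMap.rTensor A σ.symm.toLinearMap) t)))
    simpa using this
  rw [h1]
  have h2 := congrFun (congrArg DFunLike.coe hflip) s
  simp only [LinearMap.comp_apply, LinearEquiv.coe_coe] at h2
  rw [h2, hs]
  simp only [LinearEquiv.apply_symm_apply]
  rw [← LinearMap.comp_apply (LinearMap.lTensor A σ.toLinearMap),
    ← LinearMap.lTensor_comp]
  have hσσ : σ.toLinearMap ∘ₗ σ.symm.toLinearMap = LinearMap.id := by
    ext x; simp
  rw [hσσ, LinearMap.lTensor_id, LinearMap.id_apply, LinearEquiv.symm_apply_apply,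
    ← LinearMap.comp_apply (LinearMap.rTensor A σ.toLinearMap),
    ← LinearMap.rTensor_comp, hσσ, LinearMap.rTensor_id, LinearMap.id_apply]

theorem stmt_5' (C : FODC A Γ) (σ : A ⊗[ℂ] A ≃ₗ[ℂ] A ⊗[ℂ] A)
    (hσ : IsBraid σ.toLinearMap)
    (hσ2 : ∀ a : A, σ (a ⊗ₜ (1 : A)) = (1 : A) ⊗ₜ a)
    (lσ : Γ ⊗[ℂ] A →ₗ[ℂ] A ⊗[ℂ] Γ) (hflip : IsLeftFlip C σ.toLinearMap lσ) :
    Function.Surjective lσ ∧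
      ∀ a b q : A,
        lσ ((LinearMap.rTensor A C.ml)
            ((TensorProduct.assoc ℂ A Γ A).symm
              ((LinearMap.lTensor A (LinearMap.rTensor A C.d))
                ((LinearMap.lTensor A σ.symm.toLinearMap)
                  ((TensorProduct.assoc ℂ A A A)
                    ((LinearMap.rTensor A σ.symm.toLinearMap) ((a ⊗ₜ b) ⊗ₜ q))))))) =
          a ⊗ₜ C.ml (b ⊗ₜ C.d q) := by
  constructor
  · intro z
    induction z using TensorProduct.induction_on with
    | zero => exact ⟨0, map_zero lσ⟩
    | tmul a x =>
        obtain ⟨t, ht⟩ := C.surj x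
        refine ⟨(LinearMap.rTensor A C.ml)
            ((TensorProduct.assoc ℂ A Γ A).symm
              ((LinearMap.lTensor A (LinearMap.rTensor A C.d))
                ((LinearMap.lTensor A σ.symm.toLinearMap)
                  ((TensorProduct.assoc ℂ A A A)
                    ((LinearMap.rTensor A σ.symm.toLinearMap)
                      ((TensorProduct.assoc ℂ A A A).symm (a ⊗ₜ t))))))), ?_⟩
        rw [chain_eq C σ lσ hflip, LinearEquiv.apply_symm_apply]
        have : LinearMap.lTensor A C.iotaL (a ⊗ₜ t) = a ⊗ₜ C.iotaL t :=
          LinearMap.lTensor_tmul A C.iotaL a t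
        rw [this, show C.iotaL t = x from ht]
    | add y z hy hz =>
        obtain ⟨u, hu⟩ := hy
        obtain ⟨v, hv⟩ := hz
        exact ⟨u + v, by rw [map_add, hu, hv]⟩
  · intro a b q
    rw [chain_eq C σ lσ hflip]
    simp [FODC.iotaL]

/-- Surjectivity of the left flip-over operator, with the explicit preimage
`ω = (m^l⊗id)(id⊗d⊗id)(id⊗σ⁻¹)(σ⁻¹⊗id)(a⊗b⊗q)` of `a ⊗ b·d(q)`. -/
theorem stmt_5 (C : FODC A Γ) (σ : A ⊗[ℂ] A ≃ₗ[ℂ] A ⊗[ℂ] A)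
    (hσ : IsBraid σ.toLinearMap)
    (hσ2 : ∀ a : A, σ (a ⊗ₜ (1 : A)) = (1 : A) ⊗ₜ a)
    (lσ : Γ ⊗[ℂ] A →ₗ[ℂ] A ⊗[ℂ] Γ) (hflip : IsLeftFlip C σ.toLinearMap lσ) :
    Function.Surjective lσ ∧
      ∀ a b q : A,
        lσ ((LinearMap.rTensor A C.ml)
            ((TensorProduct.assoc ℂ A Γ A).symm
              ((LinearMap.lTensor A (LinearMap.rTensor A C.d))
                ((LinearMap.lTensor A σ.symm.toLinearMap)
                  ((TensorProduct.assoc ℂ A A A)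
                    ((LinearMap.rTensor A σ.symm.toLinearMap) ((a ⊗ₜ b) ⊗ₜ q))))))) =
          a ⊗ₜ C.ml (b ⊗ₜ C.d q) := by
  exact stmt_5' C σ hσ hσ2 lσ hflip
end
end
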